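/- arXiv:math/9701201 — 2 statements merged into one kernel-verified Lean document; each statement's English description precedes it below -/
import Mathlib

section
/- Let A be a nonzero k × k complex matrix of the form A = B D B^{-1} where D is the diagonal matrix with entries iβ₁, …, iβ_k for real numbers β_j not all zero, and B ∈ GL(k,ℂ). Then there exists t₀ ∈ ℝ such that ‖exp(t₀ A) − I‖ ≥ 2/√k, where ‖·‖ is the Frobenius norm. -/
/-!
Conjugation does not change the trace, so `tr (exp (t A) - 1) = ∑ⱼ (exp (i t βⱼ) - 1)`, a sum of
terms with nonpositive real part. Choosing `t₀ = π / β_j` makes the `j`-th term `-2`, so the trace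
has norm at least `2`, while `|tr C| ≤ √k ‖C‖` by Cauchy–Schwarz on the diagonal.
-/

/-- The Frobenius (Euclidean) norm of a `k × k` complex matrix. -/
noncomputable def frobeniusNorm {k : ℕ} (C : Matrix (Fin k) (Fin k) ℂ) : ℝ :=
  Real.sqrt (∑ i, ∑ j, ‖C i j‖ ^ 2)

open Matrix

theorem norm_trace_le_sqrt_mul_frobeniusNorm {k : ℕ} (C : Matrix (Fin k) (Fin k) ℂ) :
    ‖C.trace‖ ≤ √k * frobeniusNorm C := by
  have hdiag : ∑ i, ‖C i i‖ ^ 2 ≤ ∑ i, ∑ j, ‖C i j‖ ^ 2 :=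
    Finset.sum_le_sum fun i _ =>
      Finset.single_le_sum (f := fun j => ‖C i j‖ ^ 2) (fun _ _ => by positivity)
        (Finset.mem_univ i)
  calc ‖C.trace‖ ≤ ∑ i, ‖C i i‖ := norm_sum_le _ _
    _ ≤ √(k * ∑ i, ‖C i i‖ ^ 2) := by
      rw [Real.le_sqrt (by positivity) (by positivity)]
      simpa using sq_sum_le_card_mul_sum_sq (s := Finset.univ) (f := fun i => ‖C i i‖)
    _ ≤ √(k * ∑ i, ∑ j, ‖C i j‖ ^ 2) := by gcongr
    _ = √k * frobeniusNorm C := Real.sqrt_mul (Nat.cast_nonneg k) _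

theorem trace_exp_conj_diagonal_sub_one {ι : Type*} [Fintype ι] [DecidableEq ι]
    {B : Matrix ι ι ℂ} (hB : IsUnit B) (d : ι → ℂ) :
    (NormedSpace.exp (B * diagonal d * B⁻¹) - 1).trace = ∑ l, (Complex.exp (d l) - 1) := by
  rw [exp_conj _ _ hB, trace_sub, trace_conj hB, exp_diagonal, trace_diagonal, trace_one,
    Finset.sum_sub_distrib, Pi.exp_def]
  simp [Complex.exp_eq_exp_ℂ]

theorem two_le_norm_sum_sub_one {ι : Type*} [Fintype ι] (z : ι → ℂ) (hz : ∀ l, ‖z l‖ ≤ 1)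
    {j : ι} (hj : z j = -1) : 2 ≤ ‖∑ l, (z l - 1)‖ := by
  calc 2 = 1 - (z j).re := by rw [hj]; norm_num
    _ ≤ ∑ l, (1 - (z l).re) :=
      Finset.single_le_sum (fun l _ => sub_nonneg.2 ((Complex.re_le_norm _).trans (hz l)))
        (Finset.mem_univ j)
    _ = -(∑ l, (z l - 1)).re := by simp [Complex.re_sum]
    _ ≤ ‖∑ l, (z l - 1)‖ := neg_le_abs _ |>.trans (Complex.abs_re_le_norm _)

theorem exists_time_frobeniusNorm_exp_sub_one_ge_general (k : ℕ)
    (β : Fin k → ℝ) (hβ : ∃ j, β j ≠ 0)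
    (B A : Matrix (Fin k) (Fin k) ℂ) (hB : IsUnit B)
    (hA : A = B * Matrix.diagonal (fun j => Complex.I * β j) * B⁻¹) :
    ∃ t₀ : ℝ, 2 / Real.sqrt k ≤ frobeniusNorm (NormedSpace.exp (t₀ • A) - 1) := by
  obtain ⟨j, hj⟩ := hβ
  refine ⟨Real.pi / β j, ?_⟩
  set t₀ := Real.pi / β j
  set z : Fin k → ℂ := fun l => Complex.exp (t₀ • (Complex.I * β l))
  have htrace : (NormedSpace.exp (t₀ • A) - 1).trace = ∑ l, (z l - 1) := by
    rw [hA, ← smul_mul_assoc, ← mul_smul_comm, ← diagonal_smul,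
      trace_exp_conj_diagonal_sub_one hB]
    rfl
  have hz : ∀ l, ‖z l‖ ≤ 1 := fun l => by simp [z, Complex.norm_exp]
  have hzj : z j = -1 := by
    have : t₀ • (Complex.I * β j) = Real.pi * Complex.I := by
      simp only [t₀, Complex.real_smul]; push_cast; field_simp [hj]
    simp only [z, this, Complex.exp_pi_mul_I]
  have hk : 0 < √(k : ℝ) := Real.sqrt_pos.mpr (by exact_mod_cast j.pos)
  rw [div_le_iff₀' hk]
  calc 2 ≤ ‖(NormedSpace.exp (t₀ • A) - 1).trace‖ :=
        htrace ▸ two_le_norm_sum_sub_one z hz hzj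
    _ ≤ √k * frobeniusNorm (NormedSpace.exp (t₀ • A) - 1) :=
        norm_trace_le_sqrt_mul_frobeniusNorm _

/-- If `A ≠ 0` is a `k × k` complex matrix of the form `A = B (i·diag β) B⁻¹` with
`β : Fin k → ℝ` not all zero and `B` invertible, then there is `t₀ ∈ ℝ` with
`‖exp(t₀ A) − I‖ ≥ 2/√k` in the Frobenius norm. -/
theorem exists_time_frobeniusNorm_exp_sub_one_ge (k : ℕ) (hk : 0 < k)
    (β : Fin k → ℝ) (hβ : ∃ j, β j ≠ 0)
    (B A : Matrix (Fin k) (Fin k) ℂ) (hB : IsUnit B)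
    (hA : A = B * Matrix.diagonal (fun j => Complex.I * β j) * B⁻¹)
    (hA0 : A ≠ 0) :
    ∃ t₀ : ℝ, 2 / Real.sqrt k ≤ frobeniusNorm (NormedSpace.exp (t₀ • A) - 1) :=
  exists_time_frobeniusNorm_exp_sub_one_ge_general k β hβ B A hB hA
end

section
/- There exists ε > 0, namely ε = 2/√k, such that every connected one-parameter subgroup {exp(tA) : t ∈ ℝ} of GL(k,ℂ), with A a nonzero k × k complex matrix, intersects the sphere {m ∈ GL(k,ℂ) : ‖m − I‖ = ε}, where ‖·‖ is the Frobenius norm; assume here that either {exp(tA)} is unbounded, or A is diagonalizable with all eigenvalues purely imaginary. -/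
open NormedSpace Matrix
open scoped Norms.Frobenius

theorem exists_dist_eq_of_continuous {X : Type*} [PseudoMetricSpace X] {γ : ℝ → X}
    (hγ : Continuous γ) (x : X) {ε t₀ t₁ : ℝ} (h₀ : dist (γ t₀) x ≤ ε)
    (h₁ : ε ≤ dist (γ t₁) x) : ∃ t, dist (γ t) x = ε :=
  (intermediate_value_uIcc (hγ.dist continuous_const).continuousOn
    (Set.mem_uIcc.2 (Or.inl ⟨h₀, h₁⟩))).imp fun _ ht => ht.2

theorem frobeniusNorm_eq_norm {k : ℕ} (C : Matrix (Fin k) (Fin k) ℂ) :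
    frobeniusNorm C = ‖C‖ := by
  simp only [frobeniusNorm, frobenius_norm_def, Real.rpow_two, Real.sqrt_eq_rpow]

theorem Matrix.frobenius_norm_sq {m n 𝕜 : Type*} [Fintype m] [Fintype n] [RCLike 𝕜]
    (C : Matrix m n 𝕜) : ‖C‖ ^ 2 = ∑ i, ∑ j, ‖C i j‖ ^ 2 := by
  rw [frobenius_norm_def, ← Real.rpow_natCast, ← Real.rpow_mul (by positivity)]
  norm_num

theorem Matrix.norm_trace_le_sqrt_card_mul_frobenius_norm {n 𝕜 : Type*} [Fintype n] [RCLike 𝕜]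
    (C : Matrix n n 𝕜) : ‖C.trace‖ ≤ √(Fintype.card n) * ‖C‖ := by
  have hdiag : (∑ i, ‖C i i‖) ^ 2 ≤ Fintype.card n * ‖C‖ ^ 2 := by
    rw [frobenius_norm_sq]
    calc (∑ i, ‖C i i‖) ^ 2 ≤ Fintype.card n * ∑ i, ‖C i i‖ ^ 2 := by
          simpa using sq_sum_le_card_mul_sum_sq (s := Finset.univ) (f := fun i => ‖C i i‖)
      _ ≤ Fintype.card n * ∑ i, ∑ j, ‖C i j‖ ^ 2 := by
          gcongr with i
          exact Finset.single_le_sum (f := fun j => ‖C i j‖ ^ 2) (fun _ _ => by positivity)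
            (Finset.mem_univ i)
  calc ‖C.trace‖ ≤ ∑ i, ‖C i i‖ := norm_sum_le _ _
    _ ≤ √(Fintype.card n * ‖C‖ ^ 2) := Real.le_sqrt_of_sq_le hdiag
    _ = √(Fintype.card n) * ‖C‖ := by
        rw [Real.sqrt_mul (by positivity), Real.sqrt_sq (norm_nonneg C)]

theorem Matrix.trace_exp_conj_diagonal {m 𝔸 : Type*} [Fintype m] [DecidableEq m]
    [NormedCommRing 𝔸] [NormedAlgebra ℚ 𝔸] [CompleteSpace 𝔸] {U : Matrix m m 𝔸} (hU : IsUnit U)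
    (v : m → 𝔸) : (exp (U * diagonal v * U⁻¹)).trace = ∑ i, exp (v i) := by
  rw [exp_conj U _ hU, trace_mul_cycle, nonsing_inv_mul U ((isUnit_iff_isUnit_det U).1 hU),
    one_mul, exp_diagonal, trace_diagonal, Pi.exp_def]

theorem re_trace_exp_smul_conj_diagonal {m : Type*} [Fintype m] [DecidableEq m]
    {B : Matrix m m ℂ} (hB : IsUnit B) (β : m → ℝ) (t : ℝ) :
    (exp (t • (B * diagonal (fun j => Complex.I * β j) * B⁻¹))).trace.re =
      ∑ j, Real.cos (t * β j) := by
  have hsmul : t • (B * diagonal (fun j => Complex.I * β j) * B⁻¹) =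
      B * diagonal (fun j => ((t * β j : ℝ) : ℂ) * Complex.I) * B⁻¹ := by
    rw [← smul_mul_assoc, ← mul_smul_comm, ← diagonal_smul]
    congr 3
    ext j
    simp only [Pi.smul_apply, Complex.real_smul, Complex.ofReal_mul]
    ring
  rw [hsmul, trace_exp_conj_diagonal hB, Complex.re_sum]
  simp only [← Complex.exp_eq_exp_ℂ, Complex.exp_ofReal_mul_I_re]

theorem exists_sum_cos_mul_le_card_sub_two {m : Type*} [Fintype m] {β : m → ℝ} (hβ : β ≠ 0) :
    ∃ t : ℝ, ∑ j, Real.cos (t * β j) ≤ Fintype.card m - 2 := by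
  obtain ⟨j₀, hj₀⟩ := Function.ne_iff.1 hβ
  refine ⟨Real.pi / β j₀, ?_⟩
  have h : 2 ≤ ∑ j, (1 - Real.cos (Real.pi / β j₀ * β j)) :=
    calc (2 : ℝ) = 1 - Real.cos (Real.pi / β j₀ * β j₀) := by
          rw [div_mul_cancel₀ _ hj₀, Real.cos_pi]; norm_num
      _ ≤ _ := Finset.single_le_sum (f := fun j => 1 - Real.cos (Real.pi / β j₀ * β j))
          (fun j _ => sub_nonneg.2 (Real.cos_le_one _))
          (Finset.mem_univ j₀)
  rw [Finset.sum_sub_distrib, Finset.sum_const, Finset.card_univ, nsmul_one] at h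
  linarith

theorem exists_two_div_sqrt_card_le_norm_exp_smul_conj_diagonal_sub_one {m : Type*} [Fintype m]
    [DecidableEq m] {B : Matrix m m ℂ} (hB : IsUnit B) {β : m → ℝ} (hβ : β ≠ 0) :
    ∃ t : ℝ, 2 / √(Fintype.card m) ≤
      ‖exp (t • (B * diagonal (fun j => Complex.I * β j) * B⁻¹)) - 1‖ := by
  obtain ⟨t, ht⟩ := exists_sum_cos_mul_le_card_sub_two hβ
  refine ⟨t, div_le_of_le_mul₀ (Real.sqrt_nonneg _) (norm_nonneg _) ?_⟩
  set C := exp (t • (B * diagonal (fun j => Complex.I * β j) * B⁻¹)) - 1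
  have hre : C.trace.re ≤ -2 := by
    simp only [C, trace_sub, trace_one, Complex.sub_re, re_trace_exp_smul_conj_diagonal hB,
      Complex.natCast_re]
    linarith
  calc (2 : ℝ) ≤ ‖C.trace‖ := by linarith [abs_le.1 (Complex.abs_re_le_norm C.trace)]
    _ ≤ √(Fintype.card m) * ‖C‖ := norm_trace_le_sqrt_card_mul_frobenius_norm C
    _ = ‖C‖ * √(Fintype.card m) := mul_comm _ _

/-- There exists `ε > 0`, namely `ε = 2/√k`, such that every one-parameter subgroup
`{exp(tA) : t ∈ ℝ}` of `GL(k,ℂ)` with `A ≠ 0` which is either unbounded, or has `A`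
diagonalizable with purely imaginary eigenvalues, meets the Frobenius sphere
`{m : ‖m − I‖ = ε}`. -/
theorem exists_eps_one_param_subgroup_meets_sphere (k : ℕ) (hk : 0 < k) :
    ∃ ε : ℝ, 0 < ε ∧ ε = 2 / Real.sqrt k ∧
      ∀ A : Matrix (Fin k) (Fin k) ℂ, A ≠ 0 →
        ((∀ R : ℝ, ∃ t : ℝ, R ≤ frobeniusNorm (NormedSpace.exp (t • A))) ∨
          (∃ B : Matrix (Fin k) (Fin k) ℂ, IsUnit B ∧ ∃ β : Fin k → ℝ,
            A = B * Matrix.diagonal (fun j => Complex.I * β j) * B⁻¹)) →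
        ∃ t : ℝ, frobeniusNorm (NormedSpace.exp (t • A) - 1) = ε := by
  refine ⟨2 / √k, by positivity, rfl, fun A hA hcase => ?_⟩
  simp only [frobeniusNorm_eq_norm, ← dist_eq_norm] at hcase ⊢
  obtain ⟨t₁, ht₁⟩ : ∃ t₁ : ℝ, 2 / √k ≤ dist (exp (t₁ • A)) 1 := by
    rcases hcase with hunbdd | ⟨B, hB, β, rfl⟩
    · obtain ⟨t₁, ht₁⟩ := hunbdd (2 / √k + ‖(1 : Matrix (Fin k) (Fin k) ℂ)‖)
      exact ⟨t₁, by linarith [dist_eq_norm (exp (t₁ • A)) 1, norm_sub_norm_le (exp (t₁ • A)) 1]⟩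
    · have hβ : β ≠ 0 := by
        rintro rfl
        simp at hA
      simpa [dist_eq_norm] using
        exists_two_div_sqrt_card_le_norm_exp_smul_conj_diagonal_sub_one hB hβ
  have hpath : Continuous fun t : ℝ => exp (t • A) :=
    exp_continuous.comp (continuous_id.smul continuous_const)
  refine exists_dist_eq_of_continuous hpath 1 (t₀ := 0) ?_ ht₁
  rw [zero_smul, exp_zero, dist_self]
  positivity
end
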